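/- arXiv:1508.01056 — 2 statements merged into one kernel-verified Lean document; each statement's English description precedes it below -/
import Mathlib

section
/- Let A be an n×n real matrix, σ₁ > 0, and u, v ∈ ℝⁿ unit vectors with A v = σ₁ u and Aᵀ u = σ₁ v. Fix indices i, j with A(i,j) = 1 and let Â = A − e_i e_jᵀ be the matrix obtained by deleting the edge (i,j). Then the largest eigenvalue σ̂₁² of ÂÂᵀ, which equals the largest eigenvalue of ÂᵀÂ, satisfies σ̂₁² ≥ σ₁² − 2σ₁ u(i) v(j) + max{u(i)², v(j)²}. -/
/-!
The Rayleigh quotients of `Â Âᵀ` at `u` and of `Âᵀ Â` at `v` are `‖Âᵀ u‖² = ‖σ₁ v − u(i) e_j‖²`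
and `‖Â v‖² = ‖σ₁ u − v(j) e_i‖²`, which expand to the two lower bounds. The two Gram matrices
have the same largest Rayleigh quotient because normalising `M w` turns a test vector `w` of
`MᵀM` into a test vector of `MMᵀ` with no smaller value.
-/

open Matrix

/-- The set of Rayleigh quotients `zᵀ M z` of `M` over unit vectors `z`; for a real
symmetric matrix, the largest eigenvalue is the greatest element of this set. -/
def raySet {n : ℕ} (M : Matrix (Fin n) (Fin n) ℝ) : Set ℝ :=
  {r | ∃ z : Fin n → ℝ, z ⬝ᵥ z = 1 ∧ r = z ⬝ᵥ (M *ᵥ z)}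

section Gram

variable {m k R : Type*} [Fintype m] [Fintype k] [CommSemiring R]

lemma dotProduct_mul_transpose_mulVec (M : Matrix m k R) (z : m → R) :
    z ⬝ᵥ ((M * Mᵀ) *ᵥ z) = (Mᵀ *ᵥ z) ⬝ᵥ (Mᵀ *ᵥ z) := by
  rw [← mulVec_mulVec, dotProduct_mulVec, ← mulVec_transpose]

lemma dotProduct_transpose_mul_mulVec (M : Matrix m k R) (z : k → R) :
    z ⬝ᵥ ((Mᵀ * M) *ᵥ z) = (M *ᵥ z) ⬝ᵥ (M *ᵥ z) := by
  simpa using dotProduct_mul_transpose_mulVec Mᵀ z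

end Gram

section OrderedRing

variable {m R : Type*} [Fintype m] [CommRing R] [LinearOrder R] [IsStrictOrderedRing R]

lemma dotProduct_self_nonneg (x : m → R) : 0 ≤ x ⬝ᵥ x :=
  Finset.sum_nonneg fun _ _ => mul_self_nonneg _

lemma sq_dotProduct_le (x y : m → R) : (x ⬝ᵥ y) ^ 2 ≤ (x ⬝ᵥ x) * (y ⬝ᵥ y) := by
  simpa only [dotProduct, sq] using Finset.sum_mul_sq_le_sq_mul_sq Finset.univ x y

end OrderedRing

lemma dotProduct_self_sub_single {m R : Type*} [Fintype m] [DecidableEq m] [CommRing R]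
    (x : m → R) (i : m) (c : R) :
    (x - Pi.single i c) ⬝ᵥ (x - Pi.single i c) = x ⬝ᵥ x - 2 * c * x i + c ^ 2 := by
  simp only [dotProduct_sub, sub_dotProduct, dotProduct_single, single_dotProduct,
    Pi.sub_apply, Pi.single_eq_same]
  ring

section Rayleigh

variable {n : ℕ}

lemma div_mem_raySet (M : Matrix (Fin n) (Fin n) ℝ) {x : Fin n → ℝ} (hx : 0 < x ⬝ᵥ x) :
    x ⬝ᵥ (M *ᵥ x) / (x ⬝ᵥ x) ∈ raySet M := by
  set c := (√(x ⬝ᵥ x))⁻¹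
  have hc : c ^ 2 = (x ⬝ᵥ x)⁻¹ := by rw [inv_pow, Real.sq_sqrt hx.le]
  refine ⟨c • x, ?_, ?_⟩
  · simp only [smul_dotProduct, dotProduct_smul, smul_eq_mul, ← mul_assoc, ← sq, hc]
    exact inv_mul_cancel₀ hx.ne'
  · simp only [mulVec_smul, smul_dotProduct, dotProduct_smul, smul_eq_mul, ← mul_assoc, ← sq, hc]
    exact div_eq_inv_mul _ _

/- When `M w ≠ 0` the witness is `M w / ‖M w‖`, by Cauchy–Schwarz:
`‖M w‖² = ⟨w, MᵀM w⟩ ≤ ‖MᵀM w‖`. -/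
lemma exists_mem_raySet_mul_transpose_ge (M : Matrix (Fin n) (Fin n) ℝ) {r : ℝ}
    (hr : r ∈ raySet (Mᵀ * M)) : ∃ r' ∈ raySet (M * Mᵀ), r ≤ r' := by
  obtain ⟨w, hw, rfl⟩ := hr
  rw [dotProduct_transpose_mul_mulVec]
  rcases (dotProduct_self_nonneg (M *ᵥ w)).eq_or_lt with h0 | hpos
  · refine ⟨_, ⟨w, hw, rfl⟩, ?_⟩
    rw [dotProduct_mul_transpose_mulVec, ← h0]
    exact dotProduct_self_nonneg _
  refine ⟨_, div_mem_raySet (M * Mᵀ) hpos, ?_⟩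
  have hcs := sq_dotProduct_le w ((Mᵀ * M) *ᵥ w)
  rw [hw, one_mul, dotProduct_transpose_mul_mulVec] at hcs
  rw [le_div_iff₀ hpos, dotProduct_mul_transpose_mulVec, mulVec_mulVec, ← sq]
  exact hcs

theorem isGreatest_raySet_transpose_mul {M : Matrix (Fin n) (Fin n) ℝ} {s : ℝ}
    (hs : IsGreatest (raySet (M * Mᵀ)) s) : IsGreatest (raySet (Mᵀ * M)) s := by
  have hub : s ∈ upperBounds (raySet (Mᵀ * M)) := fun r hr => by
    obtain ⟨r', hr', hrr'⟩ := exists_mem_raySet_mul_transpose_ge M hr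
    exact hrr'.trans (hs.2 hr')
  obtain ⟨r, hr, hsr⟩ := exists_mem_raySet_mul_transpose_ge Mᵀ (by simpa using hs.1)
  rw [transpose_transpose] at hr
  exact ⟨(hsr.antisymm (hub hr)).symm ▸ hr, hub⟩

end Rayleigh

theorem stmt_7_general {n : ℕ} (A : Matrix (Fin n) (Fin n) ℝ) (σ₁ : ℝ)
    (u v : Fin n → ℝ) (hu : u ⬝ᵥ u = 1) (hv : v ⬝ᵥ v = 1)
    (hAv : A *ᵥ v = σ₁ • u) (hATu : Aᵀ *ᵥ u = σ₁ • v)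
    (i j : Fin n) (Ahat : Matrix (Fin n) (Fin n) ℝ)
    (hAhat : Ahat = A - Matrix.single i j 1)
    (s : ℝ) (hs : IsGreatest (raySet (Ahat * Ahatᵀ)) s) :
    IsGreatest (raySet (Ahatᵀ * Ahat)) s ∧
      s ≥ σ₁ ^ 2 - 2 * σ₁ * (u i * v j) + max (u i ^ 2) (v j ^ 2) := by
  have hswap := isGreatest_raySet_transpose_mul hs
  have hAhatT_u : Ahatᵀ *ᵥ u = σ₁ • v - Pi.single j (u i) := by
    rw [hAhat, transpose_sub, sub_mulVec, hATu, transpose_single, single_mulVec, one_mul]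
    rfl
  have hAhat_v : Ahat *ᵥ v = σ₁ • u - Pi.single i (v j) := by
    rw [hAhat, sub_mulVec, hAv, single_mulVec, one_mul]
    rfl
  have hle_u : σ₁ ^ 2 - 2 * σ₁ * (u i * v j) + u i ^ 2 ≤ s := hs.2 ⟨u, hu, by
    rw [dotProduct_mul_transpose_mulVec, hAhatT_u, dotProduct_self_sub_single]
    simp only [smul_dotProduct, dotProduct_smul, hv, Pi.smul_apply, smul_eq_mul]
    ring⟩
  have hle_v : σ₁ ^ 2 - 2 * σ₁ * (u i * v j) + v j ^ 2 ≤ s := hswap.2 ⟨v, hv, by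
    rw [dotProduct_transpose_mul_mulVec, hAhat_v, dotProduct_self_sub_single]
    simp only [smul_dotProduct, dotProduct_smul, hu, Pi.smul_apply, smul_eq_mul]
    ring⟩
  exact ⟨hswap, by rw [ge_iff_le, ← le_sub_iff_add_le']; exact max_le (by linarith) (by linarith)⟩

/-- Deleting the existing edge `(i,j)` from `A`: the largest eigenvalue `σ̂₁²` of `AhatAhatᵀ`
(which equals the largest eigenvalue of `AhatᵀAhat`) satisfies
`σ̂₁² ≥ σ₁² − 2σ₁ u(i) v(j) + max{u(i)², v(j)²}`. -/
theorem stmt_7 {n : ℕ} (A : Matrix (Fin n) (Fin n) ℝ) (σ₁ : ℝ) (hσ : 0 < σ₁)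
    (u v : Fin n → ℝ) (hu : u ⬝ᵥ u = 1) (hv : v ⬝ᵥ v = 1)
    (hAv : A *ᵥ v = σ₁ • u) (hATu : Aᵀ *ᵥ u = σ₁ • v)
    (i j : Fin n) (hij : A i j = 1) (Ahat : Matrix (Fin n) (Fin n) ℝ)
    (hAhat : Ahat = A - Matrix.single i j 1)
    (s : ℝ) (hs : IsGreatest (raySet (Ahat * Ahatᵀ)) s) :
    IsGreatest (raySet (Ahatᵀ * Ahat)) s ∧
      s ≥ σ₁ ^ 2 - 2 * σ₁ * (u i * v j) + max (u i ^ 2) (v j ^ 2) :=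
  stmt_7_general A σ₁ u v hu hv hAv hATu i j Ahat hAhat s hs
end

section
/- Let A be an n×n real matrix with nonnegative entries, let 𝒜 = [[0, A],[Aᵀ, 0]] be its bipartite lift, let E = exp(𝒜) with n×n blocks E₁₁, E₁₂, E₂₁, E₂₂, and let 1 denote the all-ones vector (of the appropriate size). Then for all indices i, j: (E1)_{i} · (E1)_{n+j} − (E₁₂1)_i · (1ᵀE₁₂)_j = φ(i,j) − (E₁₁1)_i · (E₂₂1)_j, where φ(i,j) = (E1)_i (E₂₂1)_j + (E1)_{n+j} (E₁₁1)_i; moreover this difference is strictly positive, i.e., the edge total communicability centrality of (i, j') in the bipartite graph strictly exceeds the edge total communicability centrality ^egTC(i,j) = (E₁₂1)_i (1ᵀE₁₂)_j of (i,j) in the digraph. -/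
/-!
Write `a, b, c, d` for the row sums `(E₁₁1)_i, (E₁₂1)_i, (E₂₁1)_j, (E₂₂1)_j`. Since `𝒜`
is symmetric, so is `E = exp 𝒜`, hence `(1ᵀE₁₂)_j = c`, and the claim becomes the identity
`(a + b)(c + d) - bc = (a + b)d + (c + d)a - ad` together with `ac + ad + bd > 0`.
Every term of the exponential series of the nonnegative matrix `𝒜` is entrywise nonnegative,
so `E ≥ I` entrywise: this gives `b, c ≥ 0` and `a, d ≥ 1`.
-/

open Matrix

namespace Matrix

section Exp

variable {m : Type*} [Fintype m] [DecidableEq m]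

theorem hasSum_exp_apply (M : Matrix m m ℝ) (p q : m) :
    HasSum (fun k : ℕ => ((k.factorial : ℝ)⁻¹ • M ^ k) p q) (NormedSpace.exp M p q) := by
  let _ : NormedRing (Matrix m m ℝ) := Matrix.linftyOpNormedRing
  let _ : NormedAlgebra ℝ (Matrix m m ℝ) := Matrix.linftyOpNormedAlgebra
  have h := NormedSpace.exp_series_hasSum_exp' (𝕂 := ℝ) M
  exact Pi.hasSum.mp (Pi.hasSum.mp h p) q

variable {M : Matrix m m ℝ}

theorem one_apply_le_exp_apply (hM : ∀ p q, 0 ≤ M p q) (p q : m) :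
    (1 : Matrix m m ℝ) p q ≤ NormedSpace.exp M p q := by
  simpa using le_hasSum (hasSum_exp_apply M p q) 0 fun k _ =>
    mul_nonneg (by positivity) (pow_apply_nonneg hM k p q)

theorem exp_apply_nonneg (hM : ∀ p q, 0 ≤ M p q) (p q : m) :
    0 ≤ NormedSpace.exp M p q := by
  refine le_trans ?_ (one_apply_le_exp_apply hM p q)
  rw [one_apply]
  split_ifs <;> norm_num

theorem one_le_exp_apply_self (hM : ∀ p q, 0 ≤ M p q) (p : m) :
    1 ≤ NormedSpace.exp M p p := by
  simpa using one_apply_le_exp_apply hM p p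

end Exp

section Blocks

variable {l m n o α : Type*} [Fintype n] [Fintype o] [NonUnitalNonAssocSemiring α]

theorem mulVec_apply_inl (E : Matrix (l ⊕ m) (n ⊕ o) α) (x : n ⊕ o → α) (i : l) :
    (E *ᵥ x) (Sum.inl i)
      = (E.toBlocks₁₁ *ᵥ (x ∘ Sum.inl)) i + (E.toBlocks₁₂ *ᵥ (x ∘ Sum.inr)) i := by
  simp [mulVec, dotProduct, Fintype.sum_sum_type, toBlocks₁₁, toBlocks₁₂]

theorem mulVec_apply_inr (E : Matrix (l ⊕ m) (n ⊕ o) α) (x : n ⊕ o → α) (j : m) :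
    (E *ᵥ x) (Sum.inr j)
      = (E.toBlocks₂₁ *ᵥ (x ∘ Sum.inl)) j + (E.toBlocks₂₂ *ᵥ (x ∘ Sum.inr)) j := by
  simp [mulVec, dotProduct, Fintype.sum_sum_type, toBlocks₂₁, toBlocks₂₂]

end Blocks

theorem IsSymm.vecMul_toBlocks₁₂ {m n α : Type*} [Fintype m] [CommSemiring α]
    {E : Matrix (m ⊕ n) (m ⊕ n) α} (hE : E.IsSymm) (x : m → α) :
    x ᵥ* E.toBlocks₁₂ = E.toBlocks₂₁ *ᵥ x := by
  rw [← mulVec_transpose]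
  congr 1
  ext j k
  exact (hE.apply (Sum.inl k) (Sum.inr j)).symm

theorem apply_le_mulVec_one_apply {m n α : Type*} [Fintype n] [NonAssocSemiring α]
    [PartialOrder α] [IsOrderedAddMonoid α] {B : Matrix m n α} (hB : ∀ p q, 0 ≤ B p q)
    (i : m) (k : n) : B i k ≤ (B *ᵥ 1) i := by
  simpa [mulVec, dotProduct] using
    Finset.single_le_sum (fun q _ => hB i q) (Finset.mem_univ k)

end Matrix

/-- Comparison between the edge total communicability centrality of `(i,j')` in the
bipartite lift and the edge total communicability centrality `^egTC(i,j)` in the digraph: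
their difference equals `φ(i,j) − (E₁₁1)_i (E₂₂1)_j` where
`φ(i,j) = (E1)_i (E₂₂1)_j + (E1)_{n+j} (E₁₁1)_i`, and this difference is strictly
positive. Here `E = exp(𝒜)` with `𝒜 = [[0,A],[Aᵀ,0]]` the bipartite lift of `A ≥ 0`. -/
theorem stmt_14 {n : ℕ} (A : Matrix (Fin n) (Fin n) ℝ) (hA : ∀ p q, 0 ≤ A p q)
    (E : Matrix (Fin n ⊕ Fin n) (Fin n ⊕ Fin n) ℝ)
    (hE : E = NormedSpace.exp (Matrix.fromBlocks 0 A Aᵀ 0))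
    (onesN : Fin n → ℝ) (h1 : onesN = fun _ => 1)
    (ones2N : Fin n ⊕ Fin n → ℝ) (h2 : ones2N = fun _ => 1)
    (i j : Fin n) :
    (E *ᵥ ones2N) (Sum.inl i) * (E *ᵥ ones2N) (Sum.inr j)
        - (E.toBlocks₁₂ *ᵥ onesN) i * (onesN ᵥ* E.toBlocks₁₂) j
      = ((E *ᵥ ones2N) (Sum.inl i) * (E.toBlocks₂₂ *ᵥ onesN) j
          + (E *ᵥ ones2N) (Sum.inr j) * (E.toBlocks₁₁ *ᵥ onesN) i)
        - (E.toBlocks₁₁ *ᵥ onesN) i * (E.toBlocks₂₂ *ᵥ onesN) j ∧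
    0 < (E *ᵥ ones2N) (Sum.inl i) * (E *ᵥ ones2N) (Sum.inr j)
        - (E.toBlocks₁₂ *ᵥ onesN) i * (onesN ᵥ* E.toBlocks₁₂) j := by
  obtain rfl : onesN = 1 := h1
  obtain rfl : ones2N = 1 := h2
  have h𝒜 : ∀ p q, 0 ≤ fromBlocks 0 A Aᵀ 0 p q := by
    rintro (p | p) (q | q) <;> simp [hA]
  have hE_nonneg : ∀ p q, 0 ≤ E p q := hE ▸ exp_apply_nonneg h𝒜
  have hE_diag : ∀ p, 1 ≤ E p p := hE ▸ one_le_exp_apply_self h𝒜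
  have hE_symm : E.IsSymm := hE ▸ (IsSymm.fromBlocks isSymm_zero rfl isSymm_zero).exp
  have ha : 1 ≤ (E.toBlocks₁₁ *ᵥ 1) i :=
    (hE_diag _).trans <|
      apply_le_mulVec_one_apply (B := E.toBlocks₁₁) (fun _ _ => hE_nonneg _ _) i i
  have hb : 0 ≤ (E.toBlocks₁₂ *ᵥ 1) i :=
    (hE_nonneg _ _).trans <|
      apply_le_mulVec_one_apply (B := E.toBlocks₁₂) (fun _ _ => hE_nonneg _ _) i i
  have hc : 0 ≤ (E.toBlocks₂₁ *ᵥ 1) j :=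
    (hE_nonneg _ _).trans <|
      apply_le_mulVec_one_apply (B := E.toBlocks₂₁) (fun _ _ => hE_nonneg _ _) j j
  have hd : 1 ≤ (E.toBlocks₂₂ *ᵥ 1) j :=
    (hE_diag _).trans <|
      apply_le_mulVec_one_apply (B := E.toBlocks₂₂) (fun _ _ => hE_nonneg _ _) j j
  rw [mulVec_apply_inl, mulVec_apply_inr, hE_symm.vecMul_toBlocks₁₂, Pi.one_comp, Pi.one_comp]
  refine ⟨by ring, ?_⟩
  nlinarith [mul_nonneg (zero_le_one.trans ha) hc, mul_nonneg hb (zero_le_one.trans hd)]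
end
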